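/- The operation · of I×_{β,f}^{♦,≪}H satisfies a·(b+c) = a·b + a·c for all a,b,c ∈ I×H if and only if, for all h,h',h'' ∈ H and y ∈ I: h♦β(h',h'') + f(h,h'+h'') = f(h,h') + f(h,h'') + β(h·h', h·h'') and y≪(h'+h'') = y≪h' + y≪h'' + β(h',h'') − y·β(h',h''). -/
import Mathlib


open scoped Classical

/-- A linear cycle set structure on an additive abelian group. -/
structure LCS (A : Type*) [AddCommGroup A] where
  dot : A → A → A
  bij : ∀ a, Function.Bijective (dot a)
  dot_add : ∀ a b c, dot a (b + c) = dot a b + dot a c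
  add_dot : ∀ a b c, dot (a + b) c = dot (dot a b) (dot a c)

/-- The sum of the extension `I ×_β H`. -/
def addP {I H : Type*} [AddCommGroup I] [AddCommGroup H] (β : H → H → I)
    (p q : I × H) : I × H :=
  (p.1 + q.1 + β p.2 q.2, p.2 + q.2)

/-- The cycle operation of `I ×_{β,f}^{♦,≪} H`. -/
def dotP {I H : Type*} [AddCommGroup I] [AddCommGroup H] (cI : LCS I) (cH : LCS H)
    (d : H → I → I) (yl : I → H → I) (f : H → H → I) (p q : I × H) : I × H :=
  (cI.dot (d p.2 p.1) (d p.2 q.1) + cI.dot (d p.2 p.1) (f p.2 q.2)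
      + yl (d p.2 p.1) (cH.dot p.2 q.2),
    cH.dot p.2 q.2)

lemma LCS.dot_zero' {A : Type*} [AddCommGroup A] (c : LCS A) (a : A) : c.dot a 0 = 0 := by
  have h := c.dot_add a 0 0
  rw [add_zero] at h
  exact (add_eq_left.mp h.symm)

lemma LCS.zero_dot' {A : Type*} [AddCommGroup A] (c : LCS A) (a : A) : c.dot 0 a = a := by
  have h := c.add_dot 0 0 a
  rw [zero_add, c.dot_zero'] at h
  exact ((c.bij 0).1 h).symm

/-- The operation `·` of `I ×_{β,f}^{♦,≪} H` is left distributive over the sum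
if and only if the two displayed conditions hold. -/
theorem statement4 {I H : Type*} [AddCommGroup I] [AddCommGroup H]
    (cI : LCS I) (cH : LCS H) (β : H → H → I)
    (hβ1 : ∀ h h' h'', β h h' + β (h + h') h'' = β h' h'' + β h (h' + h''))
    (hβ2 : ∀ h, β h 0 = 0 ∧ β 0 h = 0)
    (hβ3 : ∀ h h', β h h' = β h' h)
    (d : H → I → I) (yl : I → H → I) (f : H → H → I)
    (hd1 : ∀ h y y', d h (y + y') = d h y + d h y')
    (hd2 : ∀ y, d 0 y = y)
    (hyl1 : ∀ h, yl 0 h = 0)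
    (hyl2 : ∀ y, yl y 0 = 0)
    (hf : ∀ h, f h 0 = 0 ∧ f 0 h = 0) :
    (∀ a b c : I × H,
        dotP cI cH d yl f a (addP β b c) =
          addP β (dotP cI cH d yl f a b) (dotP cI cH d yl f a c)) ↔
      ((∀ h h' h'' : H,
          d h (β h' h'') + f h (h' + h'') =
            f h h' + f h h'' + β (cH.dot h h') (cH.dot h h'')) ∧
       (∀ (y : I) (h' h'' : H),
          yl y (h' + h'') = yl y h' + yl y h'' + β h' h'' - cI.dot y (β h' h''))) := by

  constructor
  · intro hmain
    constructor
    · intro h h' h''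
      have := hmain (0, h) (0, h') (0, h'')
      simp only [dotP, addP, Prod.mk.injEq] at this
      obtain ⟨t, -⟩ := this
      have hd0 : d h 0 = 0 := by
        have := hd1 h 0 0; rw [add_zero] at this; exact (add_eq_left.mp this.symm)
      simp only [hd0, cI.zero_dot', hyl1, (hβ2 _).1, (hβ2 _).2, add_zero, zero_add] at t
      rw [← t]
    · intro y h' h''
      have := hmain (y, 0) (0, h') (0, h'')
      simp only [dotP, addP, Prod.mk.injEq] at this
      obtain ⟨t, -⟩ := this
      simp only [hd2, cH.zero_dot', (hf _).1, (hf _).2, (hβ2 _).1, (hβ2 _).2,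
        cI.dot_zero', add_zero, zero_add] at t
      rw [add_comm] at t
      exact eq_sub_of_add_eq t
  · rintro ⟨c1, c2⟩ ⟨y, h⟩ ⟨y', h'⟩ ⟨y'', h''⟩
    simp only [dotP, addP, Prod.mk.injEq]
    refine ⟨?_, cH.dot_add h h' h''⟩
    set z := d h y with hz
    have key : cI.dot z (d h (β h' h'')) + cI.dot z (f h (h' + h'')) =
        cI.dot z (f h h') + cI.dot z (f h h'') +
          cI.dot z (β (cH.dot h h') (cH.dot h h'')) := by
      rw [← cI.dot_add, c1 h h' h'', cI.dot_add, cI.dot_add]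
    have key2 := eq_sub_of_add_eq key
    rw [hd1, hd1, cI.dot_add, cI.dot_add, key2, cH.dot_add,
      c2 z (cH.dot h h') (cH.dot h h'')]
    abel
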